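/- The set S₂₄ of simultaneous-eigenvector rays of the Peres–Mermin square is closed under Lüders measurements of the nine observables: for every L ∈ S₂₄, every nonzero ψ ∈ L, every i j : Fin 3 and every ε ∈ ({1, -1} : Set ℂ), setting Π = (1/2 : ℂ) • (1 + ε • PM i j), if Π.mulVec ψ ≠ 0 then the span of Π.mulVec ψ belongs to S₂₄. -/

import Mathlib

/-!
Each observable `N` of the square satisfies `N² = 1`, so the Lüders map `½ (1 + ε N)` is the
projector onto the `ε`-eigenspace of `N`; it commutes with every observable commuting with `N`
and hence keeps their eigenvectors. If `ψ` is a joint eigenvector of a row and `N` lies in that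
row, the outcome is again a joint eigenvector of the row. Otherwise the column of `N` meets the
row in an observable `A` commuting with `N`; the outcome is an eigenvector of `N` and of `A`,
hence of the third observable of the column, which is `± N A`. Columns are symmetric.
-/

open Matrix Complex Kronecker

noncomputable def σx : Matrix (Fin 2) (Fin 2) ℂ := !![0, 1; 1, 0]
noncomputable def σy : Matrix (Fin 2) (Fin 2) ℂ := !![0, -I; I, 0]
noncomputable def σz : Matrix (Fin 2) (Fin 2) ℂ := !![1, 0; 0, -1]

noncomputable def PM : Fin 3 → Fin 3 → Matrix (Fin 2 × Fin 2) (Fin 2 × Fin 2) ℂ :=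
  ![![σz ⊗ₖ 1, 1 ⊗ₖ σz, σz ⊗ₖ σz],
    ![1 ⊗ₖ σx, σx ⊗ₖ 1, σx ⊗ₖ σx],
    ![σz ⊗ₖ σx, σx ⊗ₖ σz, σy ⊗ₖ σy]]

noncomputable def S₂₄ : Set (Submodule ℂ (EuclideanSpace ℂ (Fin 2 × Fin 2))) :=
  {L | ∃ ψ : EuclideanSpace ℂ (Fin 2 × Fin 2), ψ ≠ 0 ∧ L = Submodule.span ℂ {ψ} ∧
    ((∃ i : Fin 3, ∀ j : Fin 3, ∃ c : ℂ, (PM i j).mulVec ψ = c • ψ) ∨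
     (∃ j : Fin 3, ∀ i : Fin 3, ∃ c : ℂ, (PM i j).mulVec ψ = c • ψ))}

namespace Matrix

variable {n 𝕜 : Type*} [Fintype n] [Field 𝕜]

/-- Zero counts as an eigenvector. -/
def IsEigenvec (M : Matrix n n 𝕜) (v : n → 𝕜) : Prop := ∃ c : 𝕜, M *ᵥ v = c • v

variable {M N : Matrix n n 𝕜} {v : n → 𝕜}

lemma IsEigenvec.smul (h : IsEigenvec M v) (a : 𝕜) : IsEigenvec M (a • v) := by
  obtain ⟨c, hc⟩ := h
  exact ⟨c, by rw [mulVec_smul, hc, smul_comm]⟩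

lemma IsEigenvec.smul_matrix (h : IsEigenvec M v) (s : 𝕜) : IsEigenvec (s • M) v := by
  obtain ⟨c, hc⟩ := h
  exact ⟨s * c, by rw [smul_mulVec, hc, smul_smul]⟩

lemma IsEigenvec.mul (hM : IsEigenvec M v) (hN : IsEigenvec N v) : IsEigenvec (M * N) v := by
  obtain ⟨c, hc⟩ := hM
  obtain ⟨d, hd⟩ := hN
  exact ⟨d * c, by rw [← mulVec_mulVec, hd, mulVec_smul, hc, smul_smul]⟩

variable [DecidableEq n]

def luders (ε : 𝕜) (N : Matrix n n 𝕜) : Matrix n n 𝕜 := (1 / 2 : 𝕜) • (1 + ε • N)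

lemma commute_luders (h : Commute M N) (ε : 𝕜) : Commute M (luders ε N) :=
  ((Commute.one_right M).add_right (h.smul_right ε)).smul_right _

lemma IsEigenvec.luders_mulVec (h : IsEigenvec M v) (hMN : Commute M N) (ε : 𝕜) :
    IsEigenvec M (luders ε N *ᵥ v) := by
  obtain ⟨c, hc⟩ := h
  exact ⟨c, by rw [mulVec_mulVec, (commute_luders hMN ε).eq, ← mulVec_mulVec, hc, mulVec_smul]⟩

lemma isEigenvec_luders_mulVec_self (hN : N * N = 1) {ε : 𝕜} (hε : ε * ε = 1) (v : n → 𝕜) :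
    IsEigenvec N (luders ε N *ᵥ v) := by
  refine ⟨ε, ?_⟩
  have : N * luders ε N = ε • luders ε N := by
    rw [luders, mul_smul_comm, mul_add, mul_one, mul_smul_comm, hN, smul_comm ε (1 / 2 : 𝕜),
      smul_add ε, smul_smul ε ε, hε, one_smul, add_comm]
  rw [mulVec_mulVec, this, smul_mulVec]

end Matrix

lemma σx_mul_σx : σx * σx = 1 := by
  ext i j; fin_cases i <;> fin_cases j <;> simp [σx, mul_apply, Fin.sum_univ_two, one_apply]
lemma σy_mul_σy : σy * σy = 1 := by
  ext i j; fin_cases i <;> fin_cases j <;> simp [σy, mul_apply, Fin.sum_univ_two, one_apply]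
lemma σz_mul_σz : σz * σz = 1 := by
  ext i j; fin_cases i <;> fin_cases j <;> simp [σz, mul_apply, Fin.sum_univ_two, one_apply]
lemma σx_mul_σy : σx * σy = I • σz := by
  ext i j; fin_cases i <;> fin_cases j <;> simp [σx, σy, σz, mul_apply, Fin.sum_univ_two]
lemma σy_mul_σx : σy * σx = (-I) • σz := by
  ext i j; fin_cases i <;> fin_cases j <;> simp [σx, σy, σz, mul_apply, Fin.sum_univ_two]
lemma σy_mul_σz : σy * σz = I • σx := by
  ext i j; fin_cases i <;> fin_cases j <;> simp [σx, σy, σz, mul_apply, Fin.sum_univ_two]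
lemma σz_mul_σy : σz * σy = (-I) • σx := by
  ext i j; fin_cases i <;> fin_cases j <;> simp [σx, σy, σz, mul_apply, Fin.sum_univ_two]
lemma σz_mul_σx : σz * σx = I • σy := by
  ext i j; fin_cases i <;> fin_cases j <;> simp [σx, σy, σz, mul_apply, Fin.sum_univ_two]
lemma σx_mul_σz : σx * σz = (-I) • σy := by
  ext i j; fin_cases i <;> fin_cases j <;> simp [σx, σy, σz, mul_apply, Fin.sum_univ_two]

lemma neg_kronecker {l m n p R : Type*} [CommRing R] (A : Matrix l m R) (B : Matrix n p R) :
    (-A) ⊗ₖ B = -(A ⊗ₖ B) := by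
  rw [← neg_one_smul R A, smul_kronecker, neg_one_smul]

lemma kronecker_neg {l m n p R : Type*} [CommRing R] (A : Matrix l m R) (B : Matrix n p R) :
    A ⊗ₖ (-B) = -(A ⊗ₖ B) := by
  rw [← neg_one_smul R B, kronecker_smul, neg_one_smul]

section PeresMermin

attribute [local simp] smul_kronecker kronecker_smul neg_kronecker kronecker_neg smul_smul I_mul_I
  σx_mul_σx σy_mul_σy σz_mul_σz σx_mul_σy σy_mul_σx σy_mul_σz σz_mul_σy σz_mul_σx σx_mul_σz

lemma PM_mul_self (i j : Fin 3) : PM i j * PM i j = 1 := by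
  fin_cases i <;> fin_cases j <;> simp [PM, ← mul_kronecker_mul]

lemma commute_PM_row (i j j' : Fin 3) : Commute (PM i j) (PM i j') := by
  fin_cases i <;> fin_cases j <;> fin_cases j' <;>
    simp [Commute, SemiconjBy, PM, ← mul_kronecker_mul]

lemma commute_PM_col (i i' j : Fin 3) : Commute (PM i j) (PM i' j) := by
  fin_cases i <;> fin_cases i' <;> fin_cases j <;>
    simp [Commute, SemiconjBy, PM, ← mul_kronecker_mul]

lemma PM_row_eq_mul {i j j' j'' : Fin 3} (h : j ≠ j') (h₁ : j'' ≠ j) (h₂ : j'' ≠ j') :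
    PM i j'' = PM i j * PM i j' := by
  fin_cases i <;> fin_cases j <;> fin_cases j' <;> fin_cases j'' <;>
    simp_all [PM, ← mul_kronecker_mul]

/-- The sign is the Peres–Mermin parity: every row and the first two columns multiply to `1`,
the last column to `-1`. -/
lemma PM_col_eq_smul_mul {i i' i'' j : Fin 3} (h : i ≠ i') (h₁ : i'' ≠ i) (h₂ : i'' ≠ i') :
    PM i'' j = (if j = 2 then (-1 : ℂ) else 1) • (PM i j * PM i' j) := by
  fin_cases i <;> fin_cases i' <;> fin_cases j <;> fin_cases i'' <;>
    simp_all [PM, ← mul_kronecker_mul]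

end PeresMermin

/-- The contexts of the square are its rows and columns. -/
def IsContextEigenvec (v : Fin 2 × Fin 2 → ℂ) : Prop :=
  (∃ i, ∀ j, (PM i j).IsEigenvec v) ∨ (∃ j, ∀ i, (PM i j).IsEigenvec v)

lemma IsContextEigenvec.smul {v : Fin 2 × Fin 2 → ℂ} (h : IsContextEigenvec v) (a : ℂ) :
    IsContextEigenvec (a • v) := by
  rcases h with ⟨i, h⟩ | ⟨j, h⟩
  exacts [Or.inl ⟨i, fun j => (h j).smul a⟩, Or.inr ⟨j, fun i => (h i).smul a⟩]

section Luders

variable {ε : ℂ} {v : Fin 2 × Fin 2 → ℂ}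

lemma isEigenvec_luders_PM_col {i₀ i j : Fin 3} (hε : ε * ε = 1) (hi : i ≠ i₀)
    (hv : (PM i₀ j).IsEigenvec v) (i' : Fin 3) : (PM i' j).IsEigenvec (luders ε (PM i j) *ᵥ v) := by
  have hN := isEigenvec_luders_mulVec_self (PM_mul_self i j) hε v
  have hA := hv.luders_mulVec (commute_PM_col i₀ i j) ε
  by_cases h₁ : i' = i
  · rwa [h₁]
  by_cases h₂ : i' = i₀
  · rwa [h₂]
  rw [PM_col_eq_smul_mul hi h₁ h₂]
  exact (hN.mul hA).smul_matrix _

lemma isEigenvec_luders_PM_row {j₀ i j : Fin 3} (hε : ε * ε = 1) (hj : j ≠ j₀)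
    (hv : (PM i j₀).IsEigenvec v) (j' : Fin 3) : (PM i j').IsEigenvec (luders ε (PM i j) *ᵥ v) := by
  have hN := isEigenvec_luders_mulVec_self (PM_mul_self i j) hε v
  have hA := hv.luders_mulVec (commute_PM_row i j₀ j) ε
  by_cases h₁ : j' = j
  · rwa [h₁]
  by_cases h₂ : j' = j₀
  · rwa [h₂]
  rw [PM_row_eq_mul hj h₁ h₂]
  exact hN.mul hA

lemma IsContextEigenvec.luders_PM_mulVec (h : IsContextEigenvec v) (hε : ε * ε = 1)
    (i j : Fin 3) : IsContextEigenvec (luders ε (PM i j) *ᵥ v) := by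
  rcases h with ⟨i₀, hrow⟩ | ⟨j₀, hcol⟩
  · by_cases hi : i = i₀
    · subst hi
      exact Or.inl ⟨i, fun j' => (hrow j').luders_mulVec (commute_PM_row i j' j) ε⟩
    · exact Or.inr ⟨j, isEigenvec_luders_PM_col hε hi (hrow j)⟩
  · by_cases hj : j = j₀
    · subst hj
      exact Or.inr ⟨j, fun i' => (hcol i').luders_mulVec (commute_PM_col i' i j) ε⟩
    · exact Or.inl ⟨i, isEigenvec_luders_PM_row hε hj (hcol i)⟩

end Luders

theorem S24_closed_under_Lueders (L : Submodule ℂ (EuclideanSpace ℂ (Fin 2 × Fin 2)))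
    (hL : L ∈ S₂₄) (ψ : EuclideanSpace ℂ (Fin 2 × Fin 2)) (hψL : ψ ∈ L)
    (i j : Fin 3) (ε : ℂ) (hε : ε ∈ ({1, -1} : Set ℂ)) :
    ((1 / 2 : ℂ) • (1 + ε • PM i j)).mulVec ψ ≠ 0 →
      Submodule.span ℂ {(WithLp.toLp 2 (((1 / 2 : ℂ) • (1 + ε • PM i j)).mulVec ψ) :
        EuclideanSpace ℂ (Fin 2 × Fin 2))} ∈ S₂₄ := by
  intro hne
  obtain ⟨φ, -, rfl, hφ : IsContextEigenvec φ.ofLp⟩ := hL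
  obtain ⟨a, rfl⟩ := Submodule.mem_span_singleton.mp hψL
  have hε₂ : ε * ε = 1 := by rcases hε with rfl | rfl <;> norm_num
  refine ⟨_, fun h => hne (by simpa using congrArg WithLp.ofLp h), rfl, ?_⟩
  exact (hφ.smul a).luders_PM_mulVec hε₂ i j
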